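/- arXiv:2309.13599 — 4 statements merged into one kernel-verified Lean document; each statement's English description precedes it below -/
import Mathlib

section
/- Let A be the adjacency matrix of a simple graph with degree matrix D, and let ¬Ã = 2I − A, ¬D̃ = 2I + D. Then the largest eigenvalue ¬λ_n of the matrix ¬D̃^{-1/2}(¬D̃ − ¬Ã)¬D̃^{-1/2} satisfies ¬λ_n ≤ 2 − 4/(2 + max_i D_ii), and in particular ¬λ_n < 2. -/
open Matrix BigOperators

theorem stmt1 (n : ℕ) (A : Matrix (Fin n) (Fin n) ℝ)
    (hsym : A.IsSymm) (h01 : ∀ i j, A i j = 0 ∨ A i j = 1) (hdiag : ∀ i, A i i = 0)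
    (deg : Fin n → ℝ) (hdeg : ∀ i, deg i = ∑ j, A i j)
    (At Dt Dh : Matrix (Fin n) (Fin n) ℝ)
    (hAt : At = (2 : ℝ) • (1 : Matrix (Fin n) (Fin n) ℝ) - A)
    (hDt : Dt = (2 : ℝ) • (1 : Matrix (Fin n) (Fin n) ℝ) + Matrix.diagonal deg)
    (hDh : Dh = Matrix.diagonal (fun i => 1 / Real.sqrt (deg i + 2)))
    (lam dmax : ℝ)
    (hlam : IsGreatest {μ : ℝ | ∃ v : Fin n → ℝ, v ≠ 0 ∧ (Dh * (Dt - At) * Dh) *ᵥ v = μ • v} lam)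
    (hdmax : IsGreatest {x : ℝ | ∃ i, x = deg i} dmax) :
    lam ≤ 2 - 4 / (2 + dmax) ∧ lam < 2 := by
  obtain ⟨v, hv0, hev⟩ := hlam.1
  obtain ⟨i0, hi0⟩ := hdmax.1
  set d : Fin n → ℝ := fun i => 1 / Real.sqrt (deg i + 2) with hd
  have hAnn : ∀ i j, 0 ≤ A i j := by
    intro i j; rcases h01 i j with h | h <;> rw [h] <;> norm_num
  have hdegnn : ∀ i, 0 ≤ deg i := by
    intro i; rw [hdeg]; exact Finset.sum_nonneg fun j _ => hAnn i j
  have hdpos : ∀ i, (0:ℝ) < deg i + 2 := fun i => by linarith [hdegnn i]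
  have hdmax0 : (0:ℝ) ≤ dmax := hi0 ▸ hdegnn i0
  have hdsq : ∀ i, d i ^ 2 = 1 / (deg i + 2) := by
    intro i
    rw [hd]
    simp only [div_pow, one_pow]
    rw [Real.sq_sqrt (le_of_lt (hdpos i))]
  have hBA : Dt - At = Matrix.diagonal deg + A := by
    rw [hDt, hAt]; abel
  have hAsym : ∀ i j, A j i = A i j := fun i j => hsym.apply i j
  set w : Fin n → ℝ := fun i => d i * v i with hw
  -- entrywise description of the matrix
  have hMentry : ∀ i j, (Dh * (Dt - At) * Dh) i j
      = d i * ((Matrix.diagonal deg + A) i j) * d j := by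
    intro i j
    rw [hBA, hDh]
    rw [Matrix.mul_diagonal, Matrix.diagonal_mul]
  -- key identity for the quadratic form
  have hS : lam * ∑ i, v i ^ 2
      = ∑ i, deg i * w i ^ 2 + ∑ i, ∑ j, A i j * (w i * w j) := by
    have h1 : ∀ i, (lam • v) i = ∑ j, (Dh * (Dt - At) * Dh) i j * v j := by
      intro i
      rw [← hev]
      simp [Matrix.mulVec, dotProduct]
    calc lam * ∑ i, v i ^ 2 = ∑ i, v i * (lam • v) i := by
          rw [Finset.mul_sum]; apply Finset.sum_congr rfl; intro i _
          simp only [Pi.smul_apply, smul_eq_mul]; ring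
      _ = ∑ i, ∑ j, v i * (d i * ((Matrix.diagonal deg + A) i j) * d j * v j) := by
          apply Finset.sum_congr rfl; intro i _
          rw [h1 i, Finset.mul_sum]
          apply Finset.sum_congr rfl; intro j _
          rw [hMentry i j]
      _ = ∑ i, ∑ j, (v i * (d i * ((if i = j then deg i else 0)) * d j * v j)
            + v i * (d i * A i j * d j * v j)) := by
          apply Finset.sum_congr rfl; intro i _
          apply Finset.sum_congr rfl; intro j _
          simp only [Matrix.add_apply, Matrix.diagonal_apply]
          ring
      _ = ∑ i, deg i * w i ^ 2 + ∑ i, ∑ j, A i j * (w i * w j) := by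
          rw [← Finset.sum_add_distrib]
          apply Finset.sum_congr rfl; intro i _
          rw [Finset.sum_add_distrib]
          congr 1
          · simp only [mul_ite, mul_zero, ite_mul, zero_mul,
              Finset.sum_ite_eq, Finset.mem_univ, if_true]
            simp only [hw]; ring
          · apply Finset.sum_congr rfl; intro j _
            simp only [hw]; ring
  -- bound the off-diagonal part
  have hcross : ∑ i, ∑ j, A i j * (w i * w j) ≤ ∑ i, deg i * w i ^ 2 := by
    have h0 : (0:ℝ) ≤ ∑ i, ∑ j, A i j * (w i - w j) ^ 2 :=
      Finset.sum_nonneg fun i _ => Finset.sum_nonneg fun j _ =>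
        mul_nonneg (hAnn i j) (sq_nonneg _)
    have hexp : ∑ i, ∑ j, A i j * (w i - w j) ^ 2
        = (∑ i, deg i * w i ^ 2) + (∑ i, deg i * w i ^ 2)
          - 2 * ∑ i, ∑ j, A i j * (w i * w j) := by
      have e1 : ∑ i, ∑ j, A i j * w i ^ 2 = ∑ i, deg i * w i ^ 2 := by
        apply Finset.sum_congr rfl; intro i _
        rw [hdeg, Finset.sum_mul, ← Finset.sum_mul]
      have e2 : ∑ i, ∑ j, A i j * w j ^ 2 = ∑ i, deg i * w i ^ 2 := by
        rw [Finset.sum_comm]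
        apply Finset.sum_congr rfl; intro j _
        rw [hdeg]
        rw [Finset.sum_mul]
        apply Finset.sum_congr rfl; intro i _
        rw [hAsym j i]
      calc ∑ i, ∑ j, A i j * (w i - w j) ^ 2
          = ∑ i, ∑ j, (A i j * w i ^ 2 + A i j * w j ^ 2
              - 2 * (A i j * (w i * w j))) := by
            apply Finset.sum_congr rfl; intro i _
            apply Finset.sum_congr rfl; intro j _
            ring
        _ = (∑ i, ∑ j, A i j * w i ^ 2) + (∑ i, ∑ j, A i j * w j ^ 2)
              - 2 * ∑ i, ∑ j, A i j * (w i * w j) := by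
            simp only [Finset.sum_sub_distrib, Finset.sum_add_distrib,
              Finset.mul_sum]
        _ = (∑ i, deg i * w i ^ 2) + (∑ i, deg i * w i ^ 2)
              - 2 * ∑ i, ∑ j, A i j * (w i * w j) := by rw [e1, e2]
    nlinarith [h0, hexp]
  -- diagonal part bound
  have hdiagbd : 2 * ∑ i, deg i * w i ^ 2
      ≤ (2 - 4 / (2 + dmax)) * ∑ i, v i ^ 2 := by
    rw [Finset.mul_sum, Finset.mul_sum]
    apply Finset.sum_le_sum
    intro i _
    have hwv : w i ^ 2 = v i ^ 2 / (deg i + 2) := by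
      rw [hw]; rw [mul_pow, hdsq i]; ring
    have hle : deg i ≤ dmax := hdmax.2 ⟨i, rfl⟩
    have h1 : 4 / (2 + dmax) ≤ 4 / (deg i + 2) := by
      apply div_le_div_of_nonneg_left (by norm_num) (hdpos i) (by linarith)
    have hne : deg i + 2 ≠ 0 := ne_of_gt (hdpos i)
    have h2 : 2 * (deg i * w i ^ 2) = (2 - 4 / (deg i + 2)) * v i ^ 2 := by
      rw [hwv]
      field_simp
      ring
    have h3 : (2 - 4 / (deg i + 2)) * v i ^ 2 ≤ (2 - 4 / (2 + dmax)) * v i ^ 2 := by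
      apply mul_le_mul_of_nonneg_right (by linarith) (sq_nonneg _)
    linarith
  have hT : 0 < ∑ i, v i ^ 2 := by
    obtain ⟨i, hi⟩ := Function.ne_iff.mp hv0
    exact Finset.sum_pos' (fun j _ => sq_nonneg _)
      ⟨i, Finset.mem_univ i, (sq_nonneg _).lt_of_ne' (pow_ne_zero 2 hi)⟩
  have hfinal : lam * ∑ i, v i ^ 2 ≤ (2 - 4 / (2 + dmax)) * ∑ i, v i ^ 2 := by
    rw [hS]; linarith
  have hlle : lam ≤ 2 - 4 / (2 + dmax) :=
    le_of_mul_le_mul_right (by rw [mul_comm lam, mul_comm (2 - 4 / (2 + dmax))] at hfinal ⊢; exact hfinal) hT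
  refine ⟨hlle, ?_⟩
  have : (0:ℝ) < 4 / (2 + dmax) := div_pos (by norm_num) (by linarith)
  linarith
end

section
/- Let L̃ = D̃ − Ã be the Laplacian of a graph with self-loops, where à = A + I and D̃ is the degree matrix of Ã. Define the smoothing loss Q(U) = tr(Uᵀ D̃^{-1/2} L̃ D̃^{-1/2} U) for U ∈ ℝ^{n×d}. Then the gradient descent step U' = U − (1/2)·∇Q(U) equals U' = (D̃^{-1/2} Ã D̃^{-1/2}) U, i.e., one graph convolution step is gradient descent on Q with step size 1/2. -/
/-!
Writing `Dh = D̃^{-1/2}`, the self-loops make every degree of `Ã = A + I` positive, so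
`Dh * D̃ * Dh = 1`. Hence `Dh * L̃ * Dh = 1 - Dh * Ã * Dh`, and the gradient step of size `1/2`
on `Q` cancels the identity part, leaving `U' = Dh * Ã * Dh * U`.
-/

open Matrix BigOperators

namespace Matrix

variable {ι : Type*} [Fintype ι] [DecidableEq ι]

theorem diagonal_inv_sqrt_mul_diagonal_mul_diagonal_inv_sqrt {d : ι → ℝ} (hd : ∀ i, 0 < d i) :
    diagonal (fun i => 1 / Real.sqrt (d i)) * diagonal d *
      diagonal (fun i => 1 / Real.sqrt (d i)) = 1 := by
  rw [diagonal_mul_diagonal, diagonal_mul_diagonal, ← diagonal_one]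
  congr 1
  funext i
  have hsqrt : Real.sqrt (d i) ^ 2 = d i := Real.sq_sqrt (hd i).le
  field_simp
  rw [hsqrt, div_self (hd i).ne']

theorem sum_add_one_apply_pos {A : Matrix ι ι ℝ} (hA : ∀ i j, 0 ≤ A i j) (i : ι) :
    0 < ∑ j, (A + 1) i j := by
  have hnonneg : ∀ j ∈ Finset.univ, 0 ≤ (A + 1) i j := fun j _ => by
    rw [add_apply, one_apply]
    have := hA i j
    split_ifs <;> linarith
  calc (0 : ℝ) < A i i + 1 := by linarith [hA i i]
    _ = (A + 1) i i := by rw [add_apply, one_apply_eq]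
    _ ≤ ∑ j, (A + 1) i j := Finset.single_le_sum hnonneg (Finset.mem_univ i)

theorem mul_sub_mul_mul_of_mul_mul_eq_one {R κ : Type*} [Ring R] [Fintype κ]
    {D M N : Matrix ι ι R} (U : Matrix ι κ R) (h : D * M * D = 1) :
    D * (M - N) * D * U = U - D * N * D * U := by
  rw [Matrix.mul_sub, Matrix.sub_mul, Matrix.sub_mul, h, Matrix.one_mul]

end Matrix

theorem stmt3_general (n d : ℕ) (A : Matrix (Fin n) (Fin n) ℝ)
    (h01 : ∀ i j, A i j = 0 ∨ A i j = 1)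
    (At Dt Dh : Matrix (Fin n) (Fin n) ℝ)
    (hAt : At = A + 1)
    (hDt : Dt = Matrix.diagonal (fun i => ∑ j, At i j))
    (hDh : Dh = Matrix.diagonal (fun i => 1 / Real.sqrt (∑ j, At i j)))
    (U : Matrix (Fin n) (Fin d) ℝ) :
    U - (1 / 2 : ℝ) • ((2 : ℝ) • (Dh * (Dt - At) * Dh * U)) = Dh * At * Dh * U := by
  have hA : ∀ i j, 0 ≤ A i j := fun i j => by rcases h01 i j with h | h <;> simp [h]
  have hdeg : ∀ i, 0 < ∑ j, At i j := hAt ▸ sum_add_one_apply_pos hA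
  have hnormalized : Dh * Dt * Dh = 1 := by
    rw [hDh, hDt]
    exact diagonal_inv_sqrt_mul_diagonal_mul_diagonal_inv_sqrt hdeg
  rw [mul_sub_mul_mul_of_mul_mul_eq_one U hnormalized, smul_smul]
  norm_num

theorem stmt3 (n d : ℕ) (A : Matrix (Fin n) (Fin n) ℝ)
    (hsym : A.IsSymm) (h01 : ∀ i j, A i j = 0 ∨ A i j = 1)
    (At Dt Dh : Matrix (Fin n) (Fin n) ℝ)
    (hAt : At = A + 1)
    (hDt : Dt = Matrix.diagonal (fun i => ∑ j, At i j))
    (hDh : Dh = Matrix.diagonal (fun i => 1 / Real.sqrt (∑ j, At i j)))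
    (U : Matrix (Fin n) (Fin d) ℝ) :
    U - (1 / 2 : ℝ) • ((2 : ℝ) • (Dh * (Dt - At) * Dh * U)) = Dh * At * Dh * U :=
  stmt3_general n d A h01 At Dt Dh hAt hDt hDh U
end

section
/- For the self-loop normalized adjacency M = D̃^{-1/2} Ã D̃^{-1/2} of a connected graph, the powers M^k converge as k → ∞ to the rank-one matrix v vᵀ / ‖v‖², where v_i = √(D̃_ii). -/
open Matrix Filter Topology

/-!
Let `P = v vᵀ / ‖v‖²`. Since `M` is symmetric and `M v = v`, we have `M P = P M = P² = P`, hence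
`M ^ (k + 1) = P + (M - P) ^ (k + 1)`, and it suffices that every eigenvalue `μ` of the symmetric
matrix `M - P` satisfies `|μ| < 1`. For `μ ≠ 0` an eigenvector `x` satisfies `x ⊥ v` and
`M x = μ x`. Writing `x = D̃^{1/2} z`,
  `‖x‖² - xᵀ M x = zᵀ L z`  and  `‖x‖² + xᵀ M x = zᵀ (D + A) z + 2 ‖z‖²`,
where the Laplacian `L = D - A` and the signless Laplacian `D + A` are positive semidefinite.
So `-1 < μ ≤ 1`, and `μ = 1` would force `L z = 0`, i.e. `z` constant on the connected graph,
i.e. `x` parallel to `v`, contradicting `x ⊥ v`.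
-/

theorem sub_pow_succ_of_mul_eq_self {α : Type*} [Ring α] {m p : α} (hpp : p * p = p)
    (hmp : m * p = p) (hpm : p * m = p) (k : ℕ) : (m - p) ^ (k + 1) = m ^ (k + 1) - p := by
  have hmkp : ∀ j : ℕ, m ^ j * p = p := fun j => by
    induction j with
    | zero => rw [pow_zero, one_mul]
    | succ j ih => rw [pow_succ', mul_assoc, ih, hmp]
  induction k with
  | zero => simp
  | succ k ih =>
    rw [pow_succ, ih, sub_mul, mul_sub, mul_sub, hmkp, hpm, hpp, ← pow_succ]
    abel

namespace Matrix

variable {ι : Type*} [Fintype ι] [DecidableEq ι]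

theorem IsHermitian.tendsto_pow_atTop_nhds_zero {𝕜 : Type*} [RCLike 𝕜] {A : Matrix ι ι 𝕜}
    (hA : A.IsHermitian) (h : ∀ i, |hA.eigenvalues i| < 1) :
    Tendsto (fun k : ℕ => A ^ k) atTop (𝓝 0) := by
  have hdiag : Tendsto (fun k : ℕ => diagonal (RCLike.ofReal ∘ hA.eigenvalues) ^ k) atTop
      (𝓝 (0 : Matrix ι ι 𝕜)) := by
    simp_rw [diagonal_pow, ← diagonal_zero]
    refine ((continuous_id.matrix_diagonal).tendsto _).comp (tendsto_pi_nhds.2 fun i => ?_)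
    exact tendsto_pow_atTop_nhds_zero_of_norm_lt_one (by simpa using h i)
  set φ := Unitary.conjStarAlgAut 𝕜 (Matrix ι ι 𝕜) hA.eigenvectorUnitary
  have hφ : Continuous φ :=
    ((continuous_const.mul continuous_id).mul continuous_const).congr fun x =>
      (Unitary.conjStarAlgAut_apply _ _).symm
  rw [hA.spectral_theorem]
  simpa only [← map_pow, map_zero, Function.comp_def] using (hφ.tendsto 0).comp hdiag

theorem tendsto_pow_atTop_of_isSymm_of_mulVec_eq_self {M : Matrix ι ι ℝ} (hM : M.IsSymm)
    {v : ι → ℝ} (hv : v ≠ 0) (hMv : M *ᵥ v = v)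
    (hspec : ∀ (μ : ℝ) (x : ι → ℝ), x ≠ 0 → v ⬝ᵥ x = 0 → M *ᵥ x = μ • x → |μ| < 1) :
    Tendsto (fun k : ℕ => M ^ k) atTop (𝓝 ((v ⬝ᵥ v)⁻¹ • vecMulVec v v)) := by
  set P := (v ⬝ᵥ v)⁻¹ • vecMulVec v v with hP
  have hvv : v ⬝ᵥ v ≠ 0 := dotProduct_self_eq_zero.not.mpr hv
  have hvM : v ᵥ* M = v := by rw [← mulVec_transpose, hM.eq, hMv]
  have hPP : P * P = P := by
    rw [hP, smul_mul_smul_comm, vecMulVec_mul_vecMulVec, vecMulVec_smul, smul_smul,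
      mul_assoc, inv_mul_cancel₀ hvv, mul_one]
  have hMP : M * P = P := by rw [hP, mul_smul_comm, mul_vecMulVec, hMv]
  have hPM : P * M = P := by rw [hP, smul_mul_assoc, vecMulVec_mul, hvM]
  have hR : (M - P).IsHermitian := by
    rw [IsHermitian, conjTranspose_eq_transpose_of_trivial, transpose_sub, hM.eq, hP,
      transpose_smul, transpose_vecMulVec]
  have hPR : P * (M - P) = 0 := by rw [mul_sub, hPM, hPP, sub_self]
  have hRpow : Tendsto (fun k : ℕ => (M - P) ^ k) atTop (𝓝 0) := by
    refine hR.tendsto_pow_atTop_nhds_zero fun i => ?_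
    set x : ι → ℝ := ⇑(hR.eigenvectorBasis i)
    set μ := hR.eigenvalues i
    have hx : x ≠ 0 := fun h =>
      hR.eigenvectorBasis.orthonormal.ne_zero i (WithLp.ofLp_injective 2 h)
    have hRx : (M - P) *ᵥ x = μ • x := hR.mulVec_eigenvectorBasis i
    rcases eq_or_ne μ 0 with hμ | hμ
    · simp [hμ]
    have hPx : P *ᵥ x = 0 := by
      have : μ • (P *ᵥ x) = 0 := by
        rw [← mulVec_smul, ← hRx, mulVec_mulVec, hPR, zero_mulVec]
      exact (smul_eq_zero.mp this).resolve_left hμ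
    have hvx : v ⬝ᵥ x = 0 := by
      rw [hP, smul_mulVec, vecMulVec_mulVec, op_smul_eq_smul, smul_smul, smul_eq_zero] at hPx
      simpa [hvv, hv] using hPx
    refine hspec μ x hx hvx ?_
    rw [← hRx, sub_mulVec, hPx, sub_zero]
  have hlim : Tendsto (fun k : ℕ => P + (M - P) ^ k) atTop (𝓝 P) := by
    simpa using tendsto_const_nhds.add hRpow
  refine hlim.congr' ?_
  filter_upwards [eventually_ge_atTop 1] with k hk
  obtain ⟨k, rfl⟩ := Nat.exists_eq_add_of_le' hk
  rw [sub_pow_succ_of_mul_eq_self hPP hMP hPM, add_sub_cancel]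

end Matrix

namespace SimpleGraph

variable {V : Type*} [Fintype V] (G : SimpleGraph V) [DecidableRel G.Adj]

noncomputable def sqrtSelfLoopDegree (i : V) : ℝ := √(G.degree i + 1)

theorem sqrtSelfLoopDegree_pos (i : V) : 0 < G.sqrtSelfLoopDegree i :=
  Real.sqrt_pos.2 (by positivity)

theorem sqrtSelfLoopDegree_mul_self (i : V) :
    G.sqrtSelfLoopDegree i * G.sqrtSelfLoopDegree i = G.degree i + 1 :=
  Real.mul_self_sqrt (by positivity)

variable [DecidableEq V]

theorem dotProduct_mulVec_degMatrix_add_adjMatrix_nonneg {R : Type*} [Field R] [LinearOrder R]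
    [IsStrictOrderedRing R] (x : V → R) :
    0 ≤ x ⬝ᵥ ((G.degMatrix R + G.adjMatrix R) *ᵥ x) := by
  have hswap : ∑ i, ∑ j, (if G.Adj i j then x i * x i else 0) =
      ∑ i, ∑ j, (if G.Adj i j then x j * x j else 0) := by
    rw [Finset.sum_comm]; simp_rw [G.adj_comm]
  have hexpand : ∑ i, ∑ j, (if G.Adj i j then (x i + x j) ^ 2 else 0) =
      ∑ i, ∑ j, (if G.Adj i j then x i * x i else 0) +
        ∑ i, ∑ j, (if G.Adj i j then x j * x j else 0) +
        2 * ∑ i, ∑ j, (if G.Adj i j then x i * x j else 0) := by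
    simp only [Finset.mul_sum, ← Finset.sum_add_distrib, mul_ite, mul_zero, ite_add_ite, add_zero]
    congr! 3
    ring
  have h2 : 2 * (x ⬝ᵥ ((G.degMatrix R + G.adjMatrix R) *ᵥ x)) =
      ∑ i, ∑ j, if G.Adj i j then (x i + x j) ^ 2 else 0 := by
    simp only [add_mulVec, dotProduct_add, dotProduct_mulVec_degMatrix,
      dotProduct_mulVec_adjMatrix, degree_eq_sum_if_adj, Finset.sum_mul, ite_mul, one_mul,
      zero_mul, hexpand, ← hswap]
    ring
  have : 0 ≤ ∑ i, ∑ j, if G.Adj i j then (x i + x j) ^ 2 else 0 := by positivity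
  linarith

noncomputable def selfLoopNormAdjMatrix : Matrix V V ℝ :=
  diagonal (fun i => 1 / G.sqrtSelfLoopDegree i) * (G.adjMatrix ℝ + 1) *
    diagonal (fun i => 1 / G.sqrtSelfLoopDegree i)

theorem isSymm_selfLoopNormAdjMatrix : G.selfLoopNormAdjMatrix.IsSymm := by
  rw [IsSymm, selfLoopNormAdjMatrix, transpose_mul, transpose_mul, diagonal_transpose,
    transpose_add, transpose_one, G.transpose_adjMatrix, Matrix.mul_assoc]

theorem selfLoopNormAdjMatrix_mulVec_mul_apply (z : V → ℝ) (i : V) :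
    (G.selfLoopNormAdjMatrix *ᵥ (G.sqrtSelfLoopDegree * z)) i =
      ((G.adjMatrix ℝ + 1) *ᵥ z) i / G.sqrtSelfLoopDegree i := by
  have hz : diagonal (fun i => 1 / G.sqrtSelfLoopDegree i) *ᵥ (G.sqrtSelfLoopDegree * z) = z := by
    funext j
    rw [mulVec_diagonal, Pi.mul_apply, one_div,
      inv_mul_cancel_left₀ (G.sqrtSelfLoopDegree_pos j).ne']
  rw [selfLoopNormAdjMatrix, ← mulVec_mulVec, hz, ← mulVec_mulVec, mulVec_diagonal,
    one_div_mul_eq_div]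

theorem selfLoopNormAdjMatrix_mulVec_sqrtSelfLoopDegree :
    G.selfLoopNormAdjMatrix *ᵥ G.sqrtSelfLoopDegree = G.sqrtSelfLoopDegree := by
  funext i
  rw [← mul_one G.sqrtSelfLoopDegree, G.selfLoopNormAdjMatrix_mulVec_mul_apply, Pi.mul_apply,
    Pi.one_apply, mul_one, add_mulVec, one_mulVec, Pi.add_apply, ← Function.const_one,
    adjMatrix_mulVec_const_apply, mul_one, Function.const_apply, ← sqrtSelfLoopDegree_mul_self,
    mul_div_cancel_right₀ _ (G.sqrtSelfLoopDegree_pos i).ne']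

theorem dotProduct_selfLoopNormAdjMatrix_mulVec_mul (z : V → ℝ) :
    (G.sqrtSelfLoopDegree * z) ⬝ᵥ (G.selfLoopNormAdjMatrix *ᵥ (G.sqrtSelfLoopDegree * z)) =
      z ⬝ᵥ ((G.adjMatrix ℝ + 1) *ᵥ z) := by
  refine Finset.sum_congr rfl fun i _ => ?_
  rw [G.selfLoopNormAdjMatrix_mulVec_mul_apply, Pi.mul_apply, mul_assoc, mul_left_comm,
    mul_div_cancel₀ _ (G.sqrtSelfLoopDegree_pos i).ne']

theorem dotProduct_self_sqrtSelfLoopDegree_mul (z : V → ℝ) :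
    (G.sqrtSelfLoopDegree * z) ⬝ᵥ (G.sqrtSelfLoopDegree * z) =
      z ⬝ᵥ ((G.degMatrix ℝ + 1) *ᵥ z) := by
  refine Finset.sum_congr rfl fun i _ => ?_
  rw [add_mulVec, one_mulVec, Pi.add_apply, degMatrix_mulVec_apply, Pi.mul_apply]
  linear_combination (z i * z i) * G.sqrtSelfLoopDegree_mul_self i

theorem dotProduct_lapMatrix_mulVec_eq (z : V → ℝ) :
    z ⬝ᵥ (G.lapMatrix ℝ *ᵥ z) =
      (G.sqrtSelfLoopDegree * z) ⬝ᵥ (G.sqrtSelfLoopDegree * z) -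
        (G.sqrtSelfLoopDegree * z) ⬝ᵥ (G.selfLoopNormAdjMatrix *ᵥ (G.sqrtSelfLoopDegree * z)) := by
  rw [dotProduct_self_sqrtSelfLoopDegree_mul, dotProduct_selfLoopNormAdjMatrix_mulVec_mul,
    ← dotProduct_sub, ← sub_mulVec, add_sub_add_right_eq_sub, lapMatrix]

theorem dotProduct_degMatrix_add_adjMatrix_mulVec_eq (z : V → ℝ) :
    z ⬝ᵥ ((G.degMatrix ℝ + G.adjMatrix ℝ) *ᵥ z) + 2 * (z ⬝ᵥ z) =
      (G.sqrtSelfLoopDegree * z) ⬝ᵥ (G.sqrtSelfLoopDegree * z) +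
        (G.sqrtSelfLoopDegree * z) ⬝ᵥ (G.selfLoopNormAdjMatrix *ᵥ (G.sqrtSelfLoopDegree * z)) := by
  rw [dotProduct_self_sqrtSelfLoopDegree_mul, dotProduct_selfLoopNormAdjMatrix_mulVec_mul]
  simp only [add_mulVec, one_mulVec, dotProduct_add]
  ring

theorem abs_lt_one_of_selfLoopNormAdjMatrix_mulVec_eq_smul (hG : G.Connected) {μ : ℝ}
    {x : V → ℝ} (hx : x ≠ 0) (hxv : G.sqrtSelfLoopDegree ⬝ᵥ x = 0)
    (hMx : G.selfLoopNormAdjMatrix *ᵥ x = μ • x) : |μ| < 1 := by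
  obtain ⟨z, hxz⟩ : ∃ z, x = G.sqrtSelfLoopDegree * z :=
    ⟨x / G.sqrtSelfLoopDegree,
      funext fun i => (mul_div_cancel₀ _ (G.sqrtSelfLoopDegree_pos i).ne').symm⟩
  have hz : z ≠ 0 := by rintro rfl; exact hx (by rw [hxz, mul_zero])
  have hxx : 0 < x ⬝ᵥ x := by simpa using dotProduct_self_star_pos_iff.2 hx
  have hzz : 0 < z ⬝ᵥ z := by simpa using dotProduct_self_star_pos_iff.2 hz
  have hxMx : x ⬝ᵥ (G.selfLoopNormAdjMatrix *ᵥ x) = μ * (x ⬝ᵥ x) := by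
    rw [hMx, dotProduct_smul, smul_eq_mul]
  have hlap : z ⬝ᵥ (G.lapMatrix ℝ *ᵥ z) = (1 - μ) * (x ⬝ᵥ x) := by
    rw [dotProduct_lapMatrix_mulVec_eq, ← hxz, hxMx]
    ring
  have hsignless : z ⬝ᵥ ((G.degMatrix ℝ + G.adjMatrix ℝ) *ᵥ z) + 2 * (z ⬝ᵥ z) =
      (1 + μ) * (x ⬝ᵥ x) := by
    rw [dotProduct_degMatrix_add_adjMatrix_mulVec_eq, ← hxz, hxMx]
    ring
  have hlap_nonneg : 0 ≤ z ⬝ᵥ (G.lapMatrix ℝ *ᵥ z) := by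
    simpa using (posSemidef_lapMatrix ℝ G).dotProduct_mulVec_nonneg z
  have hsignless_nonneg := G.dotProduct_mulVec_degMatrix_add_adjMatrix_nonneg z
  have hne : μ ≠ 1 := by
    rintro rfl
    have hLz : G.lapMatrix ℝ *ᵥ z = 0 := by
      rw [← (posSemidef_lapMatrix ℝ G).dotProduct_mulVec_zero_iff, star_trivial, hlap, sub_self,
        zero_mul]
    obtain ⟨i₀⟩ := hG.nonempty
    have hx_parallel : x = z i₀ • G.sqrtSelfLoopDegree := funext fun i => by
      rw [hxz, Pi.mul_apply, Pi.smul_apply, smul_eq_mul, mul_comm,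
        G.lapMatrix_mulVec_eq_zero_iff_forall_reachable.1 hLz i i₀ (hG.preconnected i i₀)]
    nth_rewrite 1 [hx_parallel] at hxx
    rw [smul_dotProduct, hxv, smul_zero] at hxx
    exact lt_irrefl 0 hxx
  have hle : μ ≤ 1 := by nlinarith
  have hgt : -1 < μ := by nlinarith
  exact abs_lt.2 ⟨hgt, lt_of_le_of_ne hle hne⟩

end SimpleGraph

theorem stmt15_general (n : ℕ) (G : SimpleGraph (Fin n)) [DecidableRel G.Adj]
    (hconn : G.Connected)
    (A : Matrix (Fin n) (Fin n) ℝ) (hA : A = G.adjMatrix ℝ)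
    (deg : Fin n → ℝ) (hdeg : ∀ i, deg i = ∑ j, A i j)
    (M : Matrix (Fin n) (Fin n) ℝ)
    (hM : M = Matrix.diagonal (fun i => 1 / Real.sqrt (deg i + 1)) * (A + 1) *
      Matrix.diagonal (fun i => 1 / Real.sqrt (deg i + 1)))
    (v : Fin n → ℝ) (hv : v = fun i => Real.sqrt (deg i + 1)) :
    Filter.Tendsto (fun k : ℕ => M ^ k) Filter.atTop
      (nhds ((∑ i, v i ^ 2)⁻¹ • Matrix.vecMulVec v v)) := by
  subst hA
  obtain rfl : deg = fun i => (G.degree i : ℝ) := funext fun i => by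
    rw [hdeg, G.degree_eq_sum_if_adj]
    simp only [SimpleGraph.adjMatrix_apply]
  obtain rfl : M = G.selfLoopNormAdjMatrix := hM
  obtain rfl : v = G.sqrtSelfLoopDegree := hv
  have hv0 : G.sqrtSelfLoopDegree ≠ 0 := fun h => by
    obtain ⟨i⟩ := hconn.nonempty
    exact (G.sqrtSelfLoopDegree_pos i).ne' (congrFun h i)
  simpa only [dotProduct, sq] using
    tendsto_pow_atTop_of_isSymm_of_mulVec_eq_self G.isSymm_selfLoopNormAdjMatrix hv0
      G.selfLoopNormAdjMatrix_mulVec_sqrtSelfLoopDegree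
      fun _ _ => G.abs_lt_one_of_selfLoopNormAdjMatrix_mulVec_eq_smul hconn

theorem stmt15 (n : ℕ) (G : SimpleGraph (Fin n)) [DecidableRel G.Adj]
    (hconn : G.Connected) (hedge : ∃ i j, G.Adj i j)
    (A : Matrix (Fin n) (Fin n) ℝ) (hA : A = G.adjMatrix ℝ)
    (deg : Fin n → ℝ) (hdeg : ∀ i, deg i = ∑ j, A i j)
    (M : Matrix (Fin n) (Fin n) ℝ)
    (hM : M = Matrix.diagonal (fun i => 1 / Real.sqrt (deg i + 1)) * (A + 1) *
      Matrix.diagonal (fun i => 1 / Real.sqrt (deg i + 1)))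
    (v : Fin n → ℝ) (hv : v = fun i => Real.sqrt (deg i + 1)) :
    Filter.Tendsto (fun k : ℕ => M ^ k) Filter.atTop
      (nhds ((∑ i, v i ^ 2)⁻¹ • Matrix.vecMulVec v v)) :=
  stmt15_general n G hconn A hA deg hdeg M hM v hv
end

section
/- Let ¬A be a symmetric 0-1 adjacency matrix with degree matrix ¬D, and set ¬D̃ = ¬D + 2I. If ε_n = 1 is the largest eigenvalue of ¬D^{-1/2} ¬A ¬D^{-1/2}, then the largest eigenvalue ω_n of ¬D̃^{-1/2} ¬A ¬D̃^{-1/2} satisfies ω_n ≤ max_i ¬D_ii / (2 + max_i ¬D_ii). -/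
/-!
Write `D = diag d` and `Dₛ = D + s • 1`. By the Rayleigh quotient, `λ_max (D^{-1/2} A D^{-1/2}) ≤ 1`
gives `xᵀ A x ≤ ∑ dᵢ xᵢ²` (take `y = D^{1/2} x`). Applied to `x = Dₛ^{-1/2} v` this yields
`vᵀ Dₛ^{-1/2} A Dₛ^{-1/2} v ≤ ∑ dᵢ / (dᵢ + s) vᵢ² ≤ d_max / (s + d_max) ‖v‖²`, and an eigenvector
for `ω` turns this into `ω ≤ d_max / (s + d_max)`.
-/

open Matrix BigOperators

namespace Matrix

variable {ι : Type*} [Fintype ι]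

def realEigenvalues (M : Matrix ι ι ℝ) : Set ℝ :=
  {μ | ∃ v : ι → ℝ, v ≠ 0 ∧ M *ᵥ v = μ • v}

lemma dotProduct_self_pos {R : Type*} [Ring R] [LinearOrder R] [IsStrictOrderedRing R]
    {v : ι → R} (hv : v ≠ 0) : 0 < v ⬝ᵥ v :=
  (Finset.sum_nonneg fun i _ => mul_self_nonneg (v i)).lt_of_ne'
    (dotProduct_self_eq_zero.not.mpr hv)

lemma mem_upperBounds_realEigenvalues_of_dotProduct_mulVec_le {M : Matrix ι ι ℝ} {c : ℝ}
    (h : ∀ v, v ⬝ᵥ M *ᵥ v ≤ c * (v ⬝ᵥ v)) : c ∈ upperBounds M.realEigenvalues := by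
  rintro μ ⟨v, hv, hMv⟩
  have hquad : μ * (v ⬝ᵥ v) ≤ c * (v ⬝ᵥ v) := by
    simpa only [hMv, dotProduct_smul, smul_eq_mul] using h v
  exact le_of_mul_le_mul_right hquad (dotProduct_self_pos hv)

/-- `c • 1 - M` is positive semidefinite: its eigenvectors are those of `M`, with eigenvalues
`c - μ`. -/
lemma IsHermitian.dotProduct_mulVec_le [DecidableEq ι] {M : Matrix ι ι ℝ} (hM : M.IsHermitian)
    {c : ℝ} (hc : c ∈ upperBounds M.realEigenvalues) (y : ι → ℝ) : y ⬝ᵥ M *ᵥ y ≤ c * (y ⬝ᵥ y) := by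
  have hN : (c • 1 - M).IsHermitian := (isHermitian_one.smul (IsSelfAdjoint.all c)).sub hM
  have hpsd : (c • 1 - M).PosSemidef := by
    refine hN.posSemidef_iff_eigenvalues_nonneg.mpr fun i => ?_
    set v : ι → ℝ := ⇑(hN.eigenvectorBasis i)
    have hMv : M *ᵥ v = (c - hN.eigenvalues i) • v := by
      have := hN.mulVec_eigenvectorBasis i
      rw [sub_mulVec, smul_mulVec, one_mulVec] at this
      rw [sub_smul, ← this]
      abel
    have hv : v ≠ 0 := (WithLp.ofLp_eq_zero 2).ne.mpr (hN.eigenvectorBasis.orthonormal.ne_zero i)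
    simpa using hc ⟨v, hv, hMv⟩
  have := hpsd.dotProduct_mulVec_nonneg y
  rw [star_trivial, sub_mulVec, smul_mulVec, one_mulVec, dotProduct_sub, dotProduct_smul,
    smul_eq_mul] at this
  linarith

lemma dotProduct_diagonal_mul_mul_diagonal_mulVec {R : Type*} [CommSemiring R] [DecidableEq ι]
    (d x : ι → R) (A : Matrix ι ι R) :
    x ⬝ᵥ (diagonal d * A * diagonal d) *ᵥ x = (d * x) ⬝ᵥ A *ᵥ (d * x) := by
  have hdx : diagonal d *ᵥ x = d * x := funext (mulVec_diagonal d x)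
  have hxd : x ᵥ* diagonal d = d * x :=
    funext fun i => (vecMul_diagonal x d i).trans (mul_comm _ _)
  rw [← mulVec_mulVec, ← mulVec_mulVec, hdx, dotProduct_mulVec, hxd]

noncomputable def symNormalize [DecidableEq ι] (A : Matrix ι ι ℝ) (d : ι → ℝ) : Matrix ι ι ℝ :=
  diagonal (fun i => 1 / Real.sqrt (d i)) * A * diagonal (fun i => 1 / Real.sqrt (d i))

variable [DecidableEq ι] {A : Matrix ι ι ℝ}

lemma IsSymm.isHermitian_symNormalize (hA : A.IsSymm) (d : ι → ℝ) :
    (A.symNormalize d).IsHermitian := by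
  have hAh : A.IsHermitian := (conjTranspose_eq_transpose_of_trivial A).trans hA
  simpa only [symNormalize, diagonal_conjTranspose, star_trivial] using
    isHermitian_conjTranspose_mul_mul (diagonal fun i => 1 / Real.sqrt (d i)) hAh

lemma IsSymm.dotProduct_mulVec_le_of_symNormalize {d : ι → ℝ} (hA : A.IsSymm)
    (hd : ∀ i, 0 < d i) (h1 : 1 ∈ upperBounds (A.symNormalize d).realEigenvalues) (x : ι → ℝ) :
    x ⬝ᵥ A *ᵥ x ≤ ∑ i, d i * x i ^ 2 := by
  set y : ι → ℝ := fun i => Real.sqrt (d i) * x i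
  have hy : (fun i => 1 / Real.sqrt (d i)) * y = x := funext fun i => by
    simp [y, (Real.sqrt_pos.mpr (hd i)).ne']
  calc x ⬝ᵥ A *ᵥ x = y ⬝ᵥ A.symNormalize d *ᵥ y := by
        rw [symNormalize, dotProduct_diagonal_mul_mul_diagonal_mulVec, hy]
    _ ≤ 1 * (y ⬝ᵥ y) := (hA.isHermitian_symNormalize d).dotProduct_mulVec_le h1 y
    _ = ∑ i, d i * x i ^ 2 := by
        simp only [one_mul, dotProduct, y]
        refine Finset.sum_congr rfl fun i _ => ?_
        rw [mul_mul_mul_comm, Real.mul_self_sqrt (hd i).le, sq]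

lemma IsSymm.mem_upperBounds_realEigenvalues_symNormalize_add {d : ι → ℝ} (hA : A.IsSymm)
    (hd : ∀ i, 0 < d i) (h1 : 1 ∈ upperBounds (A.symNormalize d).realEigenvalues)
    {s c : ℝ} (hs : 0 ≤ s) (hc : ∀ i, d i ≤ c) :
    c / (s + c) ∈ upperBounds (A.symNormalize fun i => d i + s).realEigenvalues := by
  refine mem_upperBounds_realEigenvalues_of_dotProduct_mulVec_le fun v => ?_
  rw [symNormalize, dotProduct_diagonal_mul_mul_diagonal_mulVec]
  refine (hA.dotProduct_mulVec_le_of_symNormalize hd h1 _).trans ?_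
  rw [dotProduct, Finset.mul_sum]
  refine Finset.sum_le_sum fun i _ => ?_
  have hds : 0 < d i + s := by linarith [hd i]
  have hratio : d i / (d i + s) ≤ c / (s + c) := by
    rw [div_le_div_iff₀ hds (by linarith [hd i, hc i])]
    nlinarith [hc i]
  calc d i * ((fun i => 1 / Real.sqrt (d i + s)) * v) i ^ 2
      = d i / (d i + s) * (v i * v i) := by
        simp only [Pi.mul_apply, mul_pow, div_pow, Real.sq_sqrt hds.le]
        ring
    _ ≤ c / (s + c) * (v i * v i) := mul_le_mul_of_nonneg_right hratio (mul_self_nonneg _)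

end Matrix

theorem stmt18_general (n : ℕ) (A : Matrix (Fin n) (Fin n) ℝ)
    (hsym : A.IsSymm)
    (deg : Fin n → ℝ) (hdegpos : ∀ i, 0 < deg i)
    (Dh Dth : Matrix (Fin n) (Fin n) ℝ)
    (hDh : Dh = Matrix.diagonal (fun i => 1 / Real.sqrt (deg i)))
    (hDth : Dth = Matrix.diagonal (fun i => 1 / Real.sqrt (deg i + 2)))
    (hε : IsGreatest {μ : ℝ | ∃ v : Fin n → ℝ, v ≠ 0 ∧ (Dh * A * Dh) *ᵥ v = μ • v} 1)
    (ω dmax : ℝ)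
    (hω : IsGreatest {μ : ℝ | ∃ v : Fin n → ℝ, v ≠ 0 ∧ (Dth * A * Dth) *ᵥ v = μ • v} ω)
    (hdmax : IsGreatest {t : ℝ | ∃ i, t = deg i} dmax) :
    ω ≤ dmax / (2 + dmax) := by
  subst hDh hDth
  exact hsym.mem_upperBounds_realEigenvalues_symNormalize_add hdegpos hε.2 zero_le_two
    (fun i => hdmax.2 ⟨i, rfl⟩) hω.1

theorem stmt18 (n : ℕ) (A : Matrix (Fin n) (Fin n) ℝ)
    (hsym : A.IsSymm) (h01 : ∀ i j, A i j = 0 ∨ A i j = 1) (hdiag : ∀ i, A i i = 0)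
    (deg : Fin n → ℝ) (hdeg : ∀ i, deg i = ∑ j, A i j) (hdegpos : ∀ i, 0 < deg i)
    (Dh Dth : Matrix (Fin n) (Fin n) ℝ)
    (hDh : Dh = Matrix.diagonal (fun i => 1 / Real.sqrt (deg i)))
    (hDth : Dth = Matrix.diagonal (fun i => 1 / Real.sqrt (deg i + 2)))
    (hε : IsGreatest {μ : ℝ | ∃ v : Fin n → ℝ, v ≠ 0 ∧ (Dh * A * Dh) *ᵥ v = μ • v} 1)
    (ω dmax : ℝ)
    (hω : IsGreatest {μ : ℝ | ∃ v : Fin n → ℝ, v ≠ 0 ∧ (Dth * A * Dth) *ᵥ v = μ • v} ω)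
    (hdmax : IsGreatest {t : ℝ | ∃ i, t = deg i} dmax) :
    ω ≤ dmax / (2 + dmax) :=
  stmt18_general n A hsym deg hdegpos Dh Dth hDh hDth hε ω dmax hω hdmax
end
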